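/- For a conditionally decreasing sequence of partitions: if ξ_n is a decreasing sequence of finite measurable partitions of a probability space with ξ_n ↘ ζ (the σ-algebras generated decrease to that of ζ), and η is a measurable partition with H_μ(ξ_n | η) < ∞, then the conditional entropies converge: H_μ(ξ_n | η) ↘ H_μ(ζ | η). -/

import Mathlib

open MeasureTheory Filter
open scoped ENNReal

/-- Conditional entropy `H_μ(P | Q)` of the countable partition given by the
fibers of `P` relative to the countable partition given by the fibers of `Q`:
`∑_j μ(Q=j) ∑_i φ(μ(P=i ∩ Q=j)/μ(Q=j))` with `φ(t) = -t log t`. -/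
noncomputable def condEntPart {X : Type*} [MeasurableSpace X] (μ : Measure X)
    (P Q : X → ℕ) : ℝ≥0∞ :=
  ∑' j : ℕ, ∑' i : ℕ,
    μ (Q ⁻¹' {j}) * ENNReal.ofReal (Real.negMulLog
      ((μ (P ⁻¹' {i} ∩ Q ⁻¹' {j})).toReal / (μ (Q ⁻¹' {j})).toReal))

/-!
Each `σ(ξ n)` lies below `σ(ξ 0)`, a σ-algebra with finitely many measurable sets, so the
decreasing sequence `σ(ξ n)` is eventually constant, equal to its infimum `σ(ζ)`. Partitions
generating the same σ-algebra are functions of each other, and coarsening a partition `P` to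
`g ∘ P` can only decrease `H_μ(P | η)`: on each cell of `η` this is the subadditivity of
`t ↦ -t log t` on `[0, ∞)`. Hence `H_μ(ξ n | η)` decreases and is eventually `H_μ(ζ | η)`.
-/

theorem Real.negMulLog_add_le {a b : ℝ} (ha : 0 ≤ a) (hb : 0 ≤ b) :
    Real.negMulLog (a + b) ≤ Real.negMulLog a + Real.negMulLog b := by
  have key (x y : ℝ) (hx : 0 ≤ x) (hy : 0 ≤ y) :
      -(x * Real.log (x + y)) ≤ Real.negMulLog x := by
    rcases hx.eq_or_lt with rfl | hx
    · simp
    · rw [Real.negMulLog, neg_mul]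
      exact neg_le_neg (mul_le_mul_of_nonneg_left (Real.log_le_log hx (by linarith)) hx.le)
  calc Real.negMulLog (a + b) = -(a * Real.log (a + b)) + -(b * Real.log (b + a)) := by
        rw [Real.negMulLog, add_comm b a]; ring
    _ ≤ Real.negMulLog a + Real.negMulLog b := add_le_add (key a b ha hb) (key b a hb ha)

noncomputable def negMulLogRatio (c m : ℝ≥0∞) : ℝ≥0∞ :=
  ENNReal.ofReal (Real.negMulLog (m.toReal / c.toReal))

theorem negMulLogRatio_sum_le {ι : Type*} (c : ℝ≥0∞) (s : Finset ι) (t : ι → ℝ≥0∞)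
    (ht : ∀ i ∈ s, t i ≠ ∞) :
    negMulLogRatio c (∑ i ∈ s, t i) ≤ ∑ i ∈ s, negMulLogRatio c (t i) := by
  unfold negMulLogRatio
  rw [ENNReal.toReal_sum ht, Finset.sum_div]
  calc ENNReal.ofReal (Real.negMulLog (∑ i ∈ s, (t i).toReal / c.toReal))
      ≤ ENNReal.ofReal (∑ i ∈ s, Real.negMulLog ((t i).toReal / c.toReal)) :=
        ENNReal.ofReal_le_ofReal <|
          Finset.le_sum_of_subadditive_on_pred _ (0 ≤ ·) (by simp)
            (fun _ _ => Real.negMulLog_add_le) (fun _ _ => add_nonneg) _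
            fun _ _ => by positivity
    _ ≤ ∑ i ∈ s, ENNReal.ofReal (Real.negMulLog ((t i).toReal / c.toReal)) :=
        Finset.le_sum_of_subadditive _ ENNReal.ofReal_zero.le
          (fun _ _ => ENNReal.ofReal_add_le) _ _

theorem tsum_negMulLogRatio_comp_le {X : Type*} [MeasurableSpace X] (ν : Measure X)
    [IsFiniteMeasure ν] (c : ℝ≥0∞) {P : X → ℕ} (hP : Measurable P)
    (hPfin : (Set.range P).Finite) (g : ℕ → ℕ) :
    ∑' k, negMulLogRatio c (ν ((g ∘ P) ⁻¹' {k})) ≤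
      ∑' i, negMulLogRatio c (ν (P ⁻¹' {i})) := by
  classical
  set S := hPfin.toFinset
  have hfiber : ∀ k, ν ((g ∘ P) ⁻¹' {k}) = ∑ i ∈ S with g i = k, ν (P ⁻¹' {i}) := by
    intro k
    rw [sum_measure_preimage_singleton _ fun i _ => hP (measurableSet_singleton i)]
    congr 1
    ext x
    simp [S]
  have hregroup : ∑' k, ∑ i ∈ S with g i = k, negMulLogRatio c (ν (P ⁻¹' {i}))
      = ∑ i ∈ S, negMulLogRatio c (ν (P ⁻¹' {i})) := by
    refine (tsum_eq_sum fun k hk => Finset.sum_eq_zero fun i hi => absurd ?_ hk).trans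
      (Finset.sum_fiberwise_of_maps_to (fun i hi => Finset.mem_image_of_mem g hi) _)
    rw [Finset.mem_filter] at hi
    exact hi.2 ▸ Finset.mem_image_of_mem g hi.1
  calc ∑' k, negMulLogRatio c (ν ((g ∘ P) ⁻¹' {k}))
      ≤ ∑' k, ∑ i ∈ S with g i = k, negMulLogRatio c (ν (P ⁻¹' {i})) :=
        ENNReal.tsum_le_tsum fun k => hfiber k ▸
          negMulLogRatio_sum_le c _ _ fun i _ => measure_ne_top ν _
    _ = ∑ i ∈ S, negMulLogRatio c (ν (P ⁻¹' {i})) := hregroup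
    _ ≤ ∑' i, negMulLogRatio c (ν (P ⁻¹' {i})) := ENNReal.sum_le_tsum S

theorem condEntPart_comp_le {X : Type*} [MeasurableSpace X] (μ : Measure X) [IsFiniteMeasure μ]
    {P η : X → ℕ} (g : ℕ → ℕ) (hP : Measurable P) (hη : Measurable η)
    (hPfin : (Set.range P).Finite) :
    condEntPart μ (g ∘ P) η ≤ condEntPart μ P η := by
  refine ENNReal.tsum_le_tsum fun j => ?_
  have hcell : ∀ A : Set X, μ (A ∩ η ⁻¹' {j}) = μ.restrict (η ⁻¹' {j}) A := fun A =>
    (Measure.restrict_apply' (hη (measurableSet_singleton j))).symm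
  simp only [ENNReal.tsum_mul_left, hcell]
  exact mul_le_mul_right
    (tsum_negMulLogRatio_comp_le (μ.restrict (η ⁻¹' {j})) _ hP hPfin g) _

theorem exists_eq_comp_of_comap_le {X β γ : Type*} [Nonempty γ] {e : X → β} {f : X → γ}
    (h : MeasurableSpace.comap f ⊤ ≤ MeasurableSpace.comap e ⊤) :
    ∃ g : β → γ, f = g ∘ e := by
  let : MeasurableSpace β := ⊤
  let : MeasurableSpace γ := ⊤
  have : MeasurableSingletonClass γ := ⟨fun _ => trivial⟩
  have hfac : f.FactorsThrough e := (measurable_iff_comap_le.2 h).factorsThrough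
  exact ⟨Function.extend e f fun _ => Classical.arbitrary γ,
    funext fun x => (hfac.extend_apply _ x).symm⟩

theorem condEntPart_eq_of_comap_eq {X : Type*} [MeasurableSpace X] (μ : Measure X)
    [IsFiniteMeasure μ] {P Q η : X → ℕ} (hP : Measurable P) (hPfin : (Set.range P).Finite)
    (hPQ : MeasurableSpace.comap P ⊤ = MeasurableSpace.comap Q ⊤) (hη : Measurable η) :
    condEntPart μ P η = condEntPart μ Q η := by
  obtain ⟨g, rfl⟩ := exists_eq_comp_of_comap_le hPQ.ge
  obtain ⟨h, hP_eq⟩ := exists_eq_comp_of_comap_le hPQ.le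
  refine le_antisymm ?_ (condEntPart_comp_le μ g hP hη hPfin)
  calc condEntPart μ P η = condEntPart μ (h ∘ g ∘ P) η := by rw [← hP_eq]
    _ ≤ condEntPart μ (g ∘ P) η := condEntPart_comp_le μ h (measurable_from_top.comp hP) hη
        (Set.range_comp g P ▸ hPfin.image g)

theorem MeasurableSpace.finite_Iic_comap_top {X β : Type*} {e : X → β}
    (he : (Set.range e).Finite) : (Set.Iic (MeasurableSpace.comap e ⊤)).Finite := by
  have hsets : {s : Set X | MeasurableSet[MeasurableSpace.comap e ⊤] s}.Finite := by
    refine (he.finite_subsets.image (e ⁻¹' ·)).subset ?_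
    rintro s ⟨T, -, rfl⟩
    exact ⟨T ∩ Set.range e, Set.inter_subset_right, Set.preimage_inter_range⟩
  refine (hsets.finite_subsets.preimage
    MeasurableSpace.measurableSet_injective.injOn).subset fun m hm s hs => hm s hs

theorem Antitone.eventually_eq_iInf {α : Type*} [CompleteLattice α] {f : ℕ → α}
    (hf : Antitone f) (hfin : (Set.Iic (f 0)).Finite) : ∀ᶠ n in atTop, f n = ⨅ k, f k := by
  have : Finite (Set.Iic (f 0)) := hfin.to_subtype
  obtain ⟨N, hN⟩ := WellFoundedLT.antitone_chain_condition
    (f := fun n => (⟨f n, hf (Nat.zero_le n)⟩ : Set.Iic (f 0))) fun _ _ hab => hf hab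
  have hstable : ∀ m, N ≤ m → f N = f m := fun m hm => congrArg Subtype.val (hN m hm)
  have hinf : ⨅ k, f k = f N := le_antisymm (iInf_le f N) <| le_iInf fun k =>
    (le_total k N).elim (fun hk => hf hk) fun hk => (hstable k hk).le
  filter_upwards [eventually_ge_atTop N] with m hm
  rw [hinf, hstable m hm]

theorem stmt12_general {X : Type*} [MeasurableSpace X] (μ : Measure X) [IsProbabilityMeasure μ]
    (ξ : ℕ → X → ℕ) (ζ η : X → ℕ)
    (hξ : ∀ n, Measurable (ξ n)) (hη : Measurable η)
    (hfin : ∀ n, (Set.range (ξ n)).Finite)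
    (hanti : Antitone fun n => MeasurableSpace.comap (ξ n) ⊤)
    (hlim : (⨅ n, MeasurableSpace.comap (ξ n) ⊤) = MeasurableSpace.comap ζ ⊤) :
    Antitone (fun n => condEntPart μ (ξ n) η) ∧
      Tendsto (fun n => condEntPart μ (ξ n) η) atTop (nhds (condEntPart μ ζ η)) := by
  have hmono : Antitone fun n => condEntPart μ (ξ n) η := fun a b hab => by
    obtain ⟨g, hg⟩ := exists_eq_comp_of_comap_le (hanti hab)
    simp only [hg]
    exact condEntPart_comp_le μ g (hξ a) hη (hfin a)
  refine ⟨hmono, tendsto_const_nhds.congr' ?_⟩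
  filter_upwards [hlim ▸ hanti.eventually_eq_iInf
    (MeasurableSpace.finite_Iic_comap_top (hfin 0))] with n hn
  exact (condEntPart_eq_of_comap_eq μ (hξ n) (hfin n) hn hη).symm

/-- If `ξ n` is a sequence of finite measurable partitions whose generated
σ-algebras decrease to that of the partition `ζ` (i.e. `ξ_n ↘ ζ`), and `η` is a
measurable partition with `H_μ(ξ_n | η) < ∞`, then `H_μ(ξ_n | η) ↘ H_μ(ζ | η)`. -/
theorem stmt12 {X : Type*} [MeasurableSpace X] (μ : Measure X) [IsProbabilityMeasure μ]
    (ξ : ℕ → X → ℕ) (ζ η : X → ℕ)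
    (hξ : ∀ n, Measurable (ξ n)) (hζ : Measurable ζ) (hη : Measurable η)
    (hfin : ∀ n, (Set.range (ξ n)).Finite)
    (hanti : Antitone fun n => MeasurableSpace.comap (ξ n) ⊤)
    (hlim : (⨅ n, MeasurableSpace.comap (ξ n) ⊤) = MeasurableSpace.comap ζ ⊤)
    (hH : ∀ n, condEntPart μ (ξ n) η < ⊤) :
    Antitone (fun n => condEntPart μ (ξ n) η) ∧
      Tendsto (fun n => condEntPart μ (ξ n) η) atTop (nhds (condEntPart μ ζ η)) :=
  stmt12_general μ ξ ζ η hξ hη hfin hanti hlim
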